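/- Let q > 0, α ∈ (0,1], H > 0, L > 2, and let Γ ∈ C¹(ℝ/Lℤ, ℝ^d) be arclength parametrized with parameters s, t satisfying |Γ(s) - Γ(t)| = 1 and Γ'(s) ⊥ (Γ(s) - Γ(t)), and with |Γ'(σ) - Γ'(τ)| ≤ H|σ-τ|^α for all σ, τ. Then the tangent-point radius satisfies r_tp[Γ](Γ(σ), Γ(τ)) < 6 for all σ with |s - σ| < ε₀ := min{1/8, (1/(8H))^{1/α}} and all τ with |t - τ| < 1/8. Consequently ∫_{I_ε(s)} ∫_{I_ρ(t)} r_tp[Γ](Γ(σ),Γ(τ))^{-q} dτ dσ > 6^{-q} ε ρ for all ρ ≤ 1/8, ε ≤ ε₀, where I_ε(s) is either (s-ε, s) or (s, s+ε) and similarly for I_ρ(t). -/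

import Mathlib

open MeasureTheory Set Real
open scoped RealInnerProductSpace

/-- The tangent-point radius `r_tp[Γ](Γ(σ), Γ(τ)) = |Γ(τ)-Γ(σ)|² / (2 dist(Γ(τ), Γ(σ)+ℝΓ'(σ)))`. -/
noncomputable def tpRad (d : ℕ) (Γ : ℝ → EuclideanSpace ℝ (Fin d)) (σ τ : ℝ) : ℝ :=
  ‖Γ τ - Γ σ‖ ^ 2 / (2 * Metric.infDist (Γ τ) {p | ∃ c : ℝ, p = Γ σ + c • deriv Γ σ})

/-- Periodic distance on `ℝ/Lℤ`. -/
noncomputable def pdistL (L x y : ℝ) : ℝ := ⨅ k : ℤ, |x - y + k * L|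

/-!
For `σ` near `s` and `τ` near `t`, the chord `x = Γ τ - Γ σ` differs from `Γ t - Γ s` by at most
`1/4` (`Γ` is `1`-Lipschitz), and the Hölder bound keeps `Γ' σ` within `1/8` of `Γ' s`. As
`Γ' s ⊥ Γ t - Γ s`, this gives `|x| ≤ 5/4` and `|⟪Γ' σ, x⟫| ≤ 13/32`, so the distance
`√(|x|² - ⟪Γ' σ, x⟫²)` from `Γ τ` to the tangent line at `Γ σ` is at least `1/2` and
`r_tp ≤ 25/16 < 6`. On the closed rectangle the integrand is thus continuous and at least
`(25/16)^(-q) > 6^(-q)`, and Fubini gives the integral bound.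
-/

theorem pdistL_nonneg (L x y : ℝ) : 0 ≤ pdistL L x y :=
  le_ciInf fun _ => abs_nonneg _

theorem pdistL_le_abs_sub (L x y : ℝ) : pdistL L x y ≤ |x - y| := by
  have hbdd : BddBelow (range fun k : ℤ => |x - y + k * L|) :=
    ⟨0, by rintro _ ⟨k, rfl⟩; exact abs_nonneg _⟩
  simpa [pdistL] using ciInf_le hbdd 0

theorem norm_sub_le_of_holder {F : Type*} [NormedAddCommGroup F] {f : ℝ → F} {α H L s σ : ℝ}
    (hα : 0 < α) (hH : 0 < H) (hf : ∀ σ τ, ‖f σ - f τ‖ ≤ H * pdistL L σ τ ^ α)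
    (hσ : |s - σ| ≤ (1 / (8 * H)) ^ (1 / α)) : ‖f s - f σ‖ ≤ 1 / 8 := by
  have hpow : |s - σ| ^ α ≤ 1 / (8 * H) := by
    rwa [one_div α, Real.le_rpow_inv_iff_of_pos (abs_nonneg _) (by positivity) hα] at hσ
  calc ‖f s - f σ‖ ≤ H * pdistL L s σ ^ α := hf s σ
    _ ≤ H * |s - σ| ^ α := by
      gcongr
      · exact pdistL_nonneg L s σ
      · exact pdistL_le_abs_sub L s σ
    _ ≤ H * (1 / (8 * H)) := by gcongr
    _ = 1 / 8 := by field_simp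

section InnerProductSpace

variable {E : Type*} [NormedAddCommGroup E] [InnerProductSpace ℝ E]

theorem infDist_line_eq_sqrt (a u x : E) (hu : ‖u‖ = 1) :
    Metric.infDist x {p | ∃ c : ℝ, p = a + c • u} = √(‖x - a‖ ^ 2 - ⟪u, x - a⟫ ^ 2) := by
  have hdist (c : ℝ) :
      dist x (a + c • u) = √(‖x - a‖ ^ 2 - ⟪u, x - a⟫ ^ 2 + (c - ⟪u, x - a⟫) ^ 2) := by
    rw [dist_eq_norm, ← Real.sqrt_sq (norm_nonneg _), sub_add_eq_sub_sub, norm_sub_sq_real,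
      real_inner_smul_right, norm_smul, real_inner_comm, Real.norm_eq_abs, hu, mul_one, sq_abs]
    ring_nf
  apply le_antisymm
  · calc _ ≤ dist x (a + ⟪u, x - a⟫ • u) := Metric.infDist_le_dist_of_mem (by exact ⟨_, rfl⟩)
      _ = _ := by rw [hdist, sub_self, zero_pow two_ne_zero, add_zero]
  · rw [Metric.le_infDist ⟨a, by exact ⟨0, by rw [zero_smul, add_zero]⟩⟩]
    rintro _ ⟨c, rfl⟩
    rw [hdist]
    exact Real.sqrt_le_sqrt (le_add_of_nonneg_right (sq_nonneg _))

theorem chord_estimates_of_perturbation {x y x' y' u v : E} (hchord : ‖x - y‖ = 1)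
    (hu : ‖u‖ = 1) (hperp : ⟪u, x - y⟫ = 0) (hx : ‖x - x'‖ ≤ 1 / 8) (hy : ‖y - y'‖ ≤ 1 / 8)
    (huv : ‖u - v‖ ≤ 1 / 8) :
    ‖y' - x'‖ ≤ 5 / 4 ∧ 1 / 4 ≤ ‖y' - x'‖ ^ 2 - ⟪v, y' - x'⟫ ^ 2 := by
  set w := y' - x'
  have hyx : ‖y - x‖ = 1 := by rw [norm_sub_rev, hchord]
  have hshift : ‖w - (y - x)‖ ≤ 1 / 4 := by
    calc ‖w - (y - x)‖ = ‖(y - y') - (x - x')‖ := by rw [← norm_neg]; congr 1; simp only [w]; abel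
      _ ≤ ‖y - y'‖ + ‖x - x'‖ := norm_sub_le _ _
      _ ≤ 1 / 4 := by linarith
  have hw : |‖w‖ - 1| ≤ 1 / 4 := by
    simpa only [hyx] using (abs_norm_sub_norm_le w (y - x)).trans hshift
  -- `u` is orthogonal to the unperturbed chord `y - x`, so only the shift is seen by `u`
  have hu_w : |⟪u, w⟫| ≤ 1 / 4 := by
    have h0 : ⟪u, y - x⟫ = 0 := by rw [← neg_sub, inner_neg_right, hperp, neg_zero]
    rw [← sub_zero ⟪u, w⟫, ← h0, ← inner_sub_right]
    exact (abs_real_inner_le_norm _ _).trans (by rw [hu, one_mul]; exact hshift)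
  have hv_w : |⟪v, w⟫| ≤ 13 / 32 := by
    have hdiff : |⟪u - v, w⟫| ≤ 1 / 8 * (5 / 4) :=
      (abs_real_inner_le_norm _ _).trans
        (mul_le_mul huv (by linarith [(abs_le.mp hw).2]) (norm_nonneg _) (by norm_num))
    calc |⟪v, w⟫| = |⟪u, w⟫ - ⟪u - v, w⟫| := by rw [inner_sub_left, sub_sub_cancel]
      _ ≤ |⟪u, w⟫| + |⟪u - v, w⟫| := abs_sub _ _
      _ ≤ 13 / 32 := by linarith
  obtain ⟨hw_lo, hw_hi⟩ := abs_le.mp hw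
  obtain ⟨hvw_lo, hvw_hi⟩ := abs_le.mp hv_w
  -- `(3/4)² - (13/32)² ≥ 1/4`
  exact ⟨by linarith, by nlinarith⟩

theorem chord_estimates_of_holder {Γ : ℝ → E} {α H L s t σ τ : ℝ} (hα : 0 < α) (hH : 0 < H)
    (hC1 : ContDiff ℝ 1 Γ) (harc : ∀ t, ‖deriv Γ t‖ = 1) (hchord : ‖Γ s - Γ t‖ = 1)
    (hperp : ⟪deriv Γ s, Γ s - Γ t⟫ = 0)
    (hHold : ∀ σ τ : ℝ, ‖deriv Γ σ - deriv Γ τ‖ ≤ H * pdistL L σ τ ^ α)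
    (hσ : |s - σ| ≤ min (1 / 8) ((1 / (8 * H)) ^ (1 / α))) (hτ : |t - τ| ≤ 1 / 8) :
    ‖Γ τ - Γ σ‖ ≤ 5 / 4 ∧ 1 / 4 ≤ ‖Γ τ - Γ σ‖ ^ 2 - ⟪deriv Γ σ, Γ τ - Γ σ⟫ ^ 2 := by
  have hlip : LipschitzWith 1 Γ :=
    lipschitzWith_of_nnnorm_deriv_le (hC1.differentiable one_ne_zero) fun x => by
      rw [← NNReal.coe_le_coe, coe_nnnorm, harc, NNReal.coe_one]
  have hΓ (a b : ℝ) : ‖Γ a - Γ b‖ ≤ |a - b| := by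
    simpa [dist_eq_norm, Real.dist_eq] using hlip.dist_le_mul a b
  rw [le_min_iff] at hσ
  exact chord_estimates_of_perturbation hchord (harc s) hperp
    ((hΓ s σ).trans hσ.1) ((hΓ t τ).trans hτ) (norm_sub_le_of_holder hα hH hHold hσ.2)

end InnerProductSpace

theorem mul_measureReal_le_setIntegral_setIntegral {X Y : Type*} [MeasurableSpace X]
    [MeasurableSpace Y] {μ : Measure X} {ν : Measure Y} [SFinite μ] [SFinite ν]
    {f : X × Y → ℝ} {A : Set X} {B : Set Y} {c : ℝ} (hA : MeasurableSet A) (hB : MeasurableSet B)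
    (hμA : μ A ≠ ⊤) (hνB : ν B ≠ ⊤) (hf : IntegrableOn f (A ×ˢ B) (μ.prod ν))
    (hc : ∀ x ∈ A, ∀ y ∈ B, c ≤ f (x, y)) :
    c * μ.real A * ν.real B ≤ ∫ x in A, ∫ y in B, f (x, y) ∂ν ∂μ := by
  rw [← setIntegral_prod f hf]
  have := setIntegral_ge_of_const_le (hA.prod hB)
    (by rw [Measure.prod_prod]; exact ENNReal.mul_ne_top hμA hνB)
    (fun z hz => hc z.1 hz.1 z.2 hz.2) hf
  rwa [measureReal_prod_prod, smul_eq_mul, mul_comm, ← mul_assoc] at this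

/-- The interval `I_r(a)` of the paper: either `(a - r, a)` or `(a, a + r)`. -/
def IsOneSidedIoo (a r : ℝ) (I : Set ℝ) : Prop :=
  I = Ioo (a - r) a ∨ I = Ioo a (a + r)

namespace IsOneSidedIoo

variable {a r : ℝ} {I : Set ℝ}

theorem measurableSet (hI : IsOneSidedIoo a r I) : MeasurableSet I := by
  rcases hI with rfl | rfl <;> exact measurableSet_Ioo

theorem measureReal_eq (hI : IsOneSidedIoo a r I) (hr : 0 ≤ r) : volume.real I = r := by
  rcases hI with rfl | rfl <;> simp [Real.volume_real_Ioo, hr]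

theorem measure_ne_top (hI : IsOneSidedIoo a r I) : volume I ≠ ⊤ := by
  rcases hI with rfl | rfl <;> exact measure_Ioo_lt_top.ne

theorem subset_closedBall (hI : IsOneSidedIoo a r I) : I ⊆ Metric.closedBall a r := by
  rw [Real.closedBall_eq_Icc]
  rcases hI with rfl | rfl <;>
    exact fun x hx => ⟨by linarith [hx.1, hx.2], by linarith [hx.1, hx.2]⟩

end IsOneSidedIoo

section TangentPointRadius

variable {d : ℕ} {Γ : ℝ → EuclideanSpace ℝ (Fin d)}

theorem tpRad_eq_of_norm_deriv_eq_one {σ : ℝ} (hσ : ‖deriv Γ σ‖ = 1) (τ : ℝ) :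
    tpRad d Γ σ τ =
      ‖Γ τ - Γ σ‖ ^ 2 / (2 * √(‖Γ τ - Γ σ‖ ^ 2 - ⟪deriv Γ σ, Γ τ - Γ σ⟫ ^ 2)) := by
  rw [tpRad, infDist_line_eq_sqrt _ _ _ hσ]

theorem tpRad_pos_of_radicand_pos {σ τ : ℝ} (hσ : ‖deriv Γ σ‖ = 1)
    (hrad : 0 < ‖Γ τ - Γ σ‖ ^ 2 - ⟪deriv Γ σ, Γ τ - Γ σ⟫ ^ 2) : 0 < tpRad d Γ σ τ := by
  rw [tpRad_eq_of_norm_deriv_eq_one hσ]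
  have : 0 < ‖Γ τ - Γ σ‖ ^ 2 := by nlinarith [sq_nonneg ⟪deriv Γ σ, Γ τ - Γ σ⟫]
  positivity

theorem tpRad_le_of_chord_estimates {σ τ : ℝ} (hσ : ‖deriv Γ σ‖ = 1) (hnorm : ‖Γ τ - Γ σ‖ ≤ 5 / 4)
    (hrad : 1 / 4 ≤ ‖Γ τ - Γ σ‖ ^ 2 - ⟪deriv Γ σ, Γ τ - Γ σ⟫ ^ 2) :
    tpRad d Γ σ τ ≤ 25 / 16 := by
  have hden : 1 ≤ 2 * √(‖Γ τ - Γ σ‖ ^ 2 - ⟪deriv Γ σ, Γ τ - Γ σ⟫ ^ 2) := by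
    have : 1 / 2 ≤ √(‖Γ τ - Γ σ‖ ^ 2 - ⟪deriv Γ σ, Γ τ - Γ σ⟫ ^ 2) :=
      (Real.le_sqrt (by norm_num) (by linarith)).mpr (by linarith)
    linarith
  rw [tpRad_eq_of_norm_deriv_eq_one hσ]
  calc _ ≤ ‖Γ τ - Γ σ‖ ^ 2 := div_le_self (sq_nonneg _) hden
    _ ≤ (5 / 4) ^ 2 := by gcongr
    _ = 25 / 16 := by norm_num

theorem continuousOn_tpRad_rpow (hC1 : ContDiff ℝ 1 Γ) (harc : ∀ t, ‖deriv Γ t‖ = 1) (q : ℝ)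
    {K : Set (ℝ × ℝ)}
    (hK : ∀ p ∈ K, 0 < ‖Γ p.2 - Γ p.1‖ ^ 2 - ⟪deriv Γ p.1, Γ p.2 - Γ p.1⟫ ^ 2) :
    ContinuousOn (fun p : ℝ × ℝ => tpRad d Γ p.1 p.2 ^ (-q)) K := by
  have hΓ : Continuous Γ := hC1.continuous
  have hΓ' : Continuous (deriv Γ) := hC1.continuous_deriv le_rfl
  refine ContinuousOn.rpow_const ?_ fun p hp =>
    Or.inl (tpRad_pos_of_radicand_pos (harc _) (hK p hp)).ne'
  simp_rw [tpRad_eq_of_norm_deriv_eq_one (harc _)]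
  refine ContinuousOn.div (by fun_prop) (by fun_prop) fun p hp => ?_
  have := hK p hp
  positivity

theorem mul_le_setIntegral_setIntegral_tpRad_rpow (hC1 : ContDiff ℝ 1 Γ)
    (harc : ∀ t, ‖deriv Γ t‖ = 1) {q s t r₁ r₂ ε ρ : ℝ} {Iε Iρ : Set ℝ} (hq : 0 ≤ q)
    (hest : ∀ σ τ, |s - σ| ≤ r₁ → |t - τ| ≤ r₂ →
      ‖Γ τ - Γ σ‖ ≤ 5 / 4 ∧ 1 / 4 ≤ ‖Γ τ - Γ σ‖ ^ 2 - ⟪deriv Γ σ, Γ τ - Γ σ⟫ ^ 2)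
    (hε : 0 ≤ ε) (hεr : ε ≤ r₁) (hρ : 0 ≤ ρ) (hρr : ρ ≤ r₂)
    (hIε : IsOneSidedIoo s ε Iε) (hIρ : IsOneSidedIoo t ρ Iρ) :
    (25 / 16) ^ (-q) * ε * ρ ≤ ∫ σ in Iε, ∫ τ in Iρ, tpRad d Γ σ τ ^ (-q) := by
  have hsub : Iε ×ˢ Iρ ⊆ Metric.closedBall s r₁ ×ˢ Metric.closedBall t r₂ :=
    prod_mono (hIε.subset_closedBall.trans (Metric.closedBall_subset_closedBall hεr))
      (hIρ.subset_closedBall.trans (Metric.closedBall_subset_closedBall hρr))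
  have hest' {p : ℝ × ℝ} (hp : p ∈ Metric.closedBall s r₁ ×ˢ Metric.closedBall t r₂) :=
    hest p.1 p.2 (by simpa only [Metric.mem_closedBall', Real.dist_eq] using hp.1)
      (by simpa only [Metric.mem_closedBall', Real.dist_eq] using hp.2)
  have hint : IntegrableOn (fun p : ℝ × ℝ => tpRad d Γ p.1 p.2 ^ (-q)) (Iε ×ˢ Iρ) :=
    ((continuousOn_tpRad_rpow hC1 harc q fun p hp =>
      lt_of_lt_of_le (by norm_num) (hest' hp).2).integrableOn_compact
        ((isCompact_closedBall _ _).prod (isCompact_closedBall _ _))).mono_set hsub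
  have hlower : ∀ σ ∈ Iε, ∀ τ ∈ Iρ, (25 / 16 : ℝ) ^ (-q) ≤ tpRad d Γ σ τ ^ (-q) := by
    intro σ hσ τ hτ
    obtain ⟨hnorm, hrad⟩ := hest' (hsub (mk_mem_prod hσ hτ))
    exact Real.rpow_le_rpow_of_nonpos (tpRad_pos_of_radicand_pos (harc σ) (by linarith))
      (tpRad_le_of_chord_estimates (harc σ) hnorm hrad) (neg_nonpos.mpr hq)
  calc (25 / 16) ^ (-q) * ε * ρ = (25 / 16) ^ (-q) * volume.real Iε * volume.real Iρ := by
        rw [hIε.measureReal_eq hε, hIρ.measureReal_eq hρ]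
    _ ≤ _ := mul_measureReal_le_setIntegral_setIntegral hIε.measurableSet hIρ.measurableSet
        hIε.measure_ne_top hIρ.measure_ne_top hint hlower

end TangentPointRadius

theorem stmt16_general (d : ℕ) (q α H L : ℝ) (hq : 0 < q) (hα : α ∈ Ioc (0 : ℝ) 1)
    (hH : 0 < H)
    (Γ : ℝ → EuclideanSpace ℝ (Fin d))
    (hC1 : ContDiff ℝ 1 Γ) (harc : ∀ t, ‖deriv Γ t‖ = 1)
    (s t : ℝ) (hchord : ‖Γ s - Γ t‖ = 1)
    (hperp : ⟪deriv Γ s, Γ s - Γ t⟫ = 0)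
    (hHold : ∀ σ τ : ℝ, ‖deriv Γ σ - deriv Γ τ‖ ≤ H * pdistL L σ τ ^ α) :
    (∀ σ τ : ℝ, |s - σ| < min (1/8) ((1 / (8 * H)) ^ (1/α)) → |t - τ| < 1/8 →
      tpRad d Γ σ τ < 6) ∧
    ∀ ε ρ : ℝ, 0 < ε → ε ≤ min (1/8) ((1 / (8 * H)) ^ (1/α)) → 0 < ρ → ρ ≤ 1/8 →
      ∀ Iε Iρ : Set ℝ,
        (Iε = Ioo (s - ε) s ∨ Iε = Ioo s (s + ε)) →
        (Iρ = Ioo (t - ρ) t ∨ Iρ = Ioo t (t + ρ)) →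
        (∫ σ in Iε, ∫ τ in Iρ, tpRad d Γ σ τ ^ (-q)) > 6 ^ (-q) * ε * ρ := by
  have hest (σ τ : ℝ) (hσ : |s - σ| ≤ min (1/8) ((1 / (8 * H)) ^ (1/α))) (hτ : |t - τ| ≤ 1 / 8) :=
    chord_estimates_of_holder hα.1 hH hC1 harc hchord hperp hHold hσ hτ
  refine ⟨fun σ τ hσ hτ => ?_, fun ε ρ hε hεε₀ hρ hρ8 Iε Iρ hIε hIρ => ?_⟩
  · obtain ⟨hnorm, hrad⟩ := hest σ τ hσ.le hτ.le
    exact (tpRad_le_of_chord_estimates (harc σ) hnorm hrad).trans_lt (by norm_num)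
  · have h6 : (6 : ℝ) ^ (-q) < (25 / 16) ^ (-q) :=
      Real.rpow_lt_rpow_of_neg (by norm_num) (by norm_num) (neg_lt_zero.mpr hq)
    calc 6 ^ (-q) * ε * ρ < (25 / 16) ^ (-q) * ε * ρ :=
          mul_lt_mul_of_pos_right (mul_lt_mul_of_pos_right h6 hε) hρ
      _ ≤ _ := mul_le_setIntegral_setIntegral_tpRad_rpow hC1 harc hq.le hest hε.le hεε₀ hρ.le hρ8
          hIε hIρ

theorem stmt16 (d : ℕ) (q α H L : ℝ) (hq : 0 < q) (hα : α ∈ Ioc (0 : ℝ) 1)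
    (hH : 0 < H) (hL : 2 < L)
    (Γ : ℝ → EuclideanSpace ℝ (Fin d)) (hper : ∀ t, Γ (t + L) = Γ t)
    (hC1 : ContDiff ℝ 1 Γ) (harc : ∀ t, ‖deriv Γ t‖ = 1)
    (s t : ℝ) (hchord : ‖Γ s - Γ t‖ = 1)
    (hperp : ⟪deriv Γ s, Γ s - Γ t⟫ = 0)
    (hHold : ∀ σ τ : ℝ, ‖deriv Γ σ - deriv Γ τ‖ ≤ H * pdistL L σ τ ^ α) :
    (∀ σ τ : ℝ, |s - σ| < min (1/8) ((1 / (8 * H)) ^ (1/α)) → |t - τ| < 1/8 →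
      tpRad d Γ σ τ < 6) ∧
    ∀ ε ρ : ℝ, 0 < ε → ε ≤ min (1/8) ((1 / (8 * H)) ^ (1/α)) → 0 < ρ → ρ ≤ 1/8 →
      ∀ Iε Iρ : Set ℝ,
        (Iε = Ioo (s - ε) s ∨ Iε = Ioo s (s + ε)) →
        (Iρ = Ioo (t - ρ) t ∨ Iρ = Ioo t (t + ρ)) →
        (∫ σ in Iε, ∫ τ in Iρ, tpRad d Γ σ τ ^ (-q)) > 6 ^ (-q) * ε * ρ :=
  stmt16_general d q α H L hq hα hH Γ hC1 harc s t hchord hperp hHold
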